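/- arXiv:1805.03587 — 3 statements merged into one kernel-verified Lean document; each statement's English description precedes it below -/
import Mathlib

section
/- Let $(R,\mathfrak{m})$ be a commutative Noetherian local ring with $\mathfrak{m}$-adic completion $\widehat{R}$, and let $\mathcal{M}$ be a finitely generated $\widehat{R}$-module. If $\mathcal{M}$ is finitely generated as an $R$-module (via the map $R \to \widehat{R}$), then $\mathcal{M} \simeq \mathcal{M} \otimes_R \widehat{R}$ as $\widehat{R}$-modules; in particular $\mathcal{M}$ is extended from a finitely generated $R$-module. -/
/-!
The action map `R̂ ⊗[R] M → M, a ⊗ x ↦ a • x` is onto. Composed with `M → M̂` it becomes the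
canonical map `R̂ ⊗[R] M → M̂`, which is bijective for `M` finite over a Noetherian `R`; so the
action map is injective too. The composite is the canonical map because the given `R̂`-action on `M` is
compatible with the one on `M̂`: the kernel of `R̂ → R ⧸ I ^ n` is `I ^ n R̂`, so if `a ∈ R̂` and
`r ∈ R` agree modulo `I ^ n`, then `a • x ≡ r • x` modulo `I ^ n M`.
-/

open TensorProduct IsLocalRing

universe u

namespace AdicCompletion

section ScalarTower

variable {R : Type*} [CommRing R] {I : Ideal R}
variable {M : Type*} [AddCommGroup M] [Module R M] [Module (AdicCompletion I R) M]
  [IsScalarTower R (AdicCompletion I R) M]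

theorem smul_mem_pow_smul_top_of_val_eq_zero (hI : I.FG) {n : ℕ} {a : AdicCompletion I R}
    (ha : a.val n = 0) (x : M) : a • x ∈ (I ^ n • ⊤ : Submodule R M) := by
  have ha' : a ∈ (I ^ n • ⊤ : Submodule R (AdicCompletion I R)) := by
    rwa [pow_smul_top_eq_ker_eval hI]
  refine Submodule.smul_induction_on ha' (fun r hr c _ ↦ ?_)
    (fun _ _ ↦ by rw [add_smul]; exact add_mem)
  rw [smul_assoc]
  exact Submodule.smul_mem_smul hr Submodule.mem_top

theorem of_smul_of_isScalarTower (hI : I.FG) (a : AdicCompletion I R) (x : M) :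
    of I M (a • x) = a • of I M x := by
  ext n
  obtain ⟨r, hr⟩ := Ideal.Quotient.mk_surjective (a.val n)
  have hdiff : (a - algebraMap R (AdicCompletion I R) r).val n = 0 := by
    rw [val_sub, Pi.sub_apply, sub_eq_zero, ← hr]
    rfl
  have hmem := smul_mem_pow_smul_top_of_val_eq_zero hI hdiff x
  rw [sub_smul, algebraMap_smul] at hmem
  rw [smul_eval, ← hr, of_apply, of_apply, Submodule.mkQ_apply, Submodule.mkQ_apply, mk_smul_mk,
    ← Submodule.Quotient.mk_smul, Submodule.Quotient.eq]
  exact hmem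

theorem of_liftBaseChange_id (hI : I.FG) (t : AdicCompletion I R ⊗[R] M) :
    of I M (LinearMap.liftBaseChange (AdicCompletion I R) LinearMap.id t) =
      ofTensorProduct I M t := by
  induction t with
  | zero => simp
  | add t₁ t₂ h₁ h₂ => rw [map_add, map_add, map_add, h₁, h₂]
  | tmul a x =>
    rw [LinearMap.liftBaseChange_tmul, LinearMap.id_apply, of_smul_of_isScalarTower hI,
      ofTensorProduct_tmul]

end ScalarTower

theorem liftBaseChange_id_bijective {R : Type u} [CommRing R] [IsNoetherianRing R] (I : Ideal R)
    (M : Type u) [AddCommGroup M] [Module R M] [Module (AdicCompletion I R) M]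
    [IsScalarTower R (AdicCompletion I R) M] [Module.Finite R M] :
    Function.Bijective
      (LinearMap.liftBaseChange (AdicCompletion I R) (LinearMap.id : M →ₗ[R] M)) := by
  have hI : I.FG := IsNoetherian.noetherian I
  refine ⟨fun t₁ t₂ h ↦ (ofTensorProduct_bijective_of_finite_of_isNoetherian I M).injective ?_,
    fun x ↦ ⟨1 ⊗ₜ x, by rw [LinearMap.liftBaseChange_tmul, LinearMap.id_apply, one_smul]⟩⟩
  rw [← of_liftBaseChange_id hI, ← of_liftBaseChange_id hI, h]

end AdicCompletion

theorem stmt_0_general (R : Type) [CommRing R] [IsLocalRing R] [IsNoetherianRing R]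
    (M : Type) [AddCommGroup M]
    [Module (AdicCompletion (maximalIdeal R) R) M]
    [Module R M] [IsScalarTower R (AdicCompletion (maximalIdeal R) R) M]
    (hfg : Module.Finite R M) :
    Nonempty ((AdicCompletion (maximalIdeal R) R ⊗[R] M)
        ≃ₗ[AdicCompletion (maximalIdeal R) R] M) ∧
    ∃ (N : Type) (_ : AddCommGroup N) (_ : Module R N), Module.Finite R N ∧
      Nonempty ((AdicCompletion (maximalIdeal R) R ⊗[R] N)
        ≃ₗ[AdicCompletion (maximalIdeal R) R] M) := by
  let e := LinearEquiv.ofBijective _ (AdicCompletion.liftBaseChange_id_bijective (maximalIdeal R) M)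
  exact ⟨⟨e⟩, M, inferInstance, inferInstance, hfg, ⟨e⟩⟩

/-- A finitely generated module over the completion `R̂` that is finitely generated
already over `R` is extended: `M ⊗_R R̂ ≃ M`. -/
theorem stmt_0 (R : Type) [CommRing R] [IsLocalRing R] [IsNoetherianRing R]
    (M : Type) [AddCommGroup M]
    [Module (AdicCompletion (maximalIdeal R) R) M]
    [Module R M] [IsScalarTower R (AdicCompletion (maximalIdeal R) R) M]
    [Module.Finite (AdicCompletion (maximalIdeal R) R) M]
    (hfg : Module.Finite R M) :
    Nonempty ((AdicCompletion (maximalIdeal R) R ⊗[R] M)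
        ≃ₗ[AdicCompletion (maximalIdeal R) R] M) ∧
    ∃ (N : Type) (_ : AddCommGroup N) (_ : Module R N), Module.Finite R N ∧
      Nonempty ((AdicCompletion (maximalIdeal R) R ⊗[R] N)
        ≃ₗ[AdicCompletion (maximalIdeal R) R] M) :=
  stmt_0_general R M hfg
end

section
/- Let $R$ be a countable Noetherian local ring with $\dim R > 1$ such that $\widehat{R}$ has uncountably many height-one prime ideals. Then there exists a finitely generated $\widehat{R}$-module that is not a direct summand of any module extended from a finitely generated $R$-module. -/
/-!
A direct summand of `R̂ ⊗[R] M` is the range of an idempotent endomorphism `e`, and `R̂ ⊗[R] M`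
is generated by the images `1 ⊗ gᵢ` of generators of `M`. Two idempotents agreeing modulo
`𝔪̂` are conjugate (Nakayama), so the summand `range e` is determined up to isomorphism by the
classes of the `e (1 ⊗ gᵢ)` in `(R̂ ⊗[R] M) ⧸ 𝔪̂ (R̂ ⊗[R] M)`. This quotient is a quotient of `M`
because `R → R̂ ⧸ 𝔪̂` is onto, hence countable. As there are only countably many `M` up to
isomorphism, only countably many ideals `P` have `R̂ ⧸ P` (which determines `P` as its
annihilator) as a summand of some extended module, and uncountably many primes remain.
-/

open TensorProduct IsLocalRing

section Summands

variable {S N : Type*} [CommRing S] [AddCommGroup N] [Module S N] {J : Ideal S}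

theorem Ideal.eq_of_quotient_linearEquiv {P Q : Ideal S} (e : (S ⧸ P) ≃ₗ[S] (S ⧸ Q)) : P = Q := by
  rw [← Ideal.annihilator_quotient (I := P), ← Ideal.annihilator_quotient (I := Q),
    e.annihilator_eq]

theorem LinearMap.bijective_of_range_sub_one_le [Module.Finite S N] (hJ : J ≤ Ideal.jacobson ⊥)
    {u : Module.End S N} (hu : LinearMap.range (u - 1) ≤ J • ⊤) : Function.Bijective u := by
  refine OrzechProperty.bijective_of_surjective_endomorphism u (LinearMap.range_eq_top.mp ?_)
  refine top_le_iff.mp (Submodule.le_of_le_smul_of_le_jacobson_bot Module.Finite.fg_top hJ ?_)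
  intro x _
  have hx : x = u x - (u - 1) x := by simp
  rw [hx]
  exact Submodule.sub_mem_sup (LinearMap.mem_range_self u x) (hu (LinearMap.mem_range_self _ x))

/-- `u = f e + (1 - f) (1 - e)` satisfies `u e = f u` and `u ≡ 1` modulo `J`. -/
theorem IsIdempotentElem.nonempty_range_linearEquiv [Module.Finite S N]
    (hJ : J ≤ Ideal.jacobson ⊥) {e f : Module.End S N} (he : IsIdempotentElem e)
    (hf : IsIdempotentElem f) (hef : LinearMap.range (e - f) ≤ J • ⊤) :
    Nonempty (LinearMap.range e ≃ₗ[S] LinearMap.range f) := by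
  set u := f * e + (1 - f) * (1 - e)
  have hue : u * e = f * u := by
    simp only [u, add_mul, mul_add, sub_mul, mul_sub, one_mul, mul_one, mul_assoc, he.eq]
    simp only [← mul_assoc, hf.eq]
    abel
  have hu : u - 1 = f * (e - f) - (e - f) * e := by
    simp only [u, sub_mul, mul_sub, one_mul, mul_one, he.eq, hf.eq]
    abel
  have hu1 : LinearMap.range (u - 1) ≤ J • ⊤ := by
    rintro _ ⟨x, rfl⟩
    rw [hu, LinearMap.sub_apply, Module.End.mul_apply, Module.End.mul_apply]
    exact sub_mem (Submodule.smul_top_le_comap_smul_top J f (hef ⟨x, rfl⟩)) (hef ⟨e x, rfl⟩)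
  let U := LinearEquiv.ofBijective u (LinearMap.bijective_of_range_sub_one_le hJ hu1)
  refine ⟨U.ofSubmodules _ _ ?_⟩
  have hU : (U : Module.End S N) = u := rfl
  rw [hU, ← LinearMap.range_comp, ← Module.End.mul_eq_comp, hue, Module.End.mul_eq_comp,
    LinearMap.range_comp, ← hU, LinearEquiv.range, Submodule.map_top]

theorem LinearEquiv.exists_isIdempotentElem_range {W C : Type*} [AddCommGroup W]
    [AddCommGroup C] [Module S W] [Module S C] (g : (W × C) ≃ₗ[S] N) :
    ∃ e : Module.End S N, IsIdempotentElem e ∧ Nonempty (W ≃ₗ[S] LinearMap.range e) := by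
  refine ⟨g.conj (LinearMap.inl S W C ∘ₗ LinearMap.fst S W C), ?_, ⟨?_⟩⟩
  · ext x
    simp [LinearEquiv.conj_apply]
  · have hinj : Function.Injective (g.toLinearMap ∘ₗ LinearMap.inl S W C) :=
      g.injective.comp LinearMap.inl_injective
    refine (LinearEquiv.ofInjective _ hinj).trans (LinearEquiv.ofEq _ _ ?_)
    rw [LinearEquiv.conj_apply, LinearMap.range_comp_of_range_eq_top _ g.symm.range,
      ← LinearMap.comp_assoc, LinearMap.range_comp_of_range_eq_top _ Submodule.range_fst]

variable (S N) in
def quotientSummandIdeals : Set (Ideal S) :=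
  {P | ∃ e : Module.End S N, IsIdempotentElem e ∧ Nonempty ((S ⧸ P) ≃ₗ[S] LinearMap.range e)}

theorem mem_quotientSummandIdeals {P : Ideal S} {C : Type*} [AddCommGroup C] [Module S C]
    (g : ((S ⧸ P) × C) ≃ₗ[S] N) : P ∈ quotientSummandIdeals S N :=
  g.exists_isIdempotentElem_range

end Summands

section BaseChange

variable {R S M : Type*} [CommRing R] [CommRing S] [Algebra R S] [AddCommGroup M] [Module R M]
  {J : Ideal S}

theorem TensorProduct.AlgebraTensorModule.ext_of_span_eq_top {P ι : Type*} [AddCommGroup P]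
    [Module R P] [Module S P] [IsScalarTower R S P] {g : ι → M}
    (hg : Submodule.span R (Set.range g) = ⊤) {φ ψ : S ⊗[R] M →ₗ[S] P}
    (h : ∀ i, φ (1 ⊗ₜ g i) = ψ (1 ⊗ₜ g i)) : φ = ψ :=
  curry_injective (LinearMap.ext_ring (LinearMap.ext_on_range hg h))

theorem countable_tensorProduct_quotient_smul_top [Countable M]
    (hJ : Function.Surjective ((Ideal.Quotient.mk J).comp (algebraMap R S))) :
    Countable ((S ⊗[R] M) ⧸ (J • ⊤ : Submodule S (S ⊗[R] M))) := by
  refine Function.Surjective.countable (f := fun m : M => Submodule.Quotient.mk (1 ⊗ₜ[R] m)) ?_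
  intro q
  obtain ⟨x, rfl⟩ := Submodule.Quotient.mk_surjective _ q
  induction x with
  | zero => exact ⟨0, by simp⟩
  | tmul s m =>
    obtain ⟨r, hr⟩ := hJ (Ideal.Quotient.mk J s)
    have hsr : s - algebraMap R S r ∈ J := Ideal.Quotient.eq.mp hr.symm
    refine ⟨r • m, ((Submodule.Quotient.eq _).mpr ?_).symm⟩
    convert Submodule.smul_mem_smul hsr (Submodule.mem_top (x := (1 : S) ⊗ₜ[R] m)) using 1
    rw [sub_smul, TensorProduct.smul_tmul', smul_eq_mul, mul_one, algebraMap_smul,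
      TensorProduct.tmul_smul]
  | add x y hx hy =>
    obtain ⟨m, hm⟩ := hx
    obtain ⟨m', hm'⟩ := hy
    exact ⟨m + m', by simp only [TensorProduct.tmul_add, Submodule.Quotient.mk_add, hm, hm']⟩

/-- An idempotent `e` is recorded by the classes of `e (1 ⊗ gᵢ)` modulo `J`; equal records
give isomorphic ranges, and the records range over a countable set. -/
theorem countable_quotientSummandIdeals [Module.Finite R M] [Countable M]
    (hJ : J ≤ Ideal.jacobson ⊥)
    (hsurj : Function.Surjective ((Ideal.Quotient.mk J).comp (algebraMap R S))) :
    (quotientSummandIdeals S (S ⊗[R] M)).Countable := by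
  obtain ⟨n, g, hg⟩ := Module.Finite.exists_fin (R := R) (M := M)
  let Q := (S ⊗[R] M) ⧸ (J • ⊤ : Submodule S (S ⊗[R] M))
  have : Countable Q := countable_tensorProduct_quotient_smul_top hsurj
  let record (e : Module.End S (S ⊗[R] M)) : Fin n → Q :=
    fun i => Submodule.Quotient.mk (e (1 ⊗ₜ g i))
  have hrecord {e f} (h : record e = record f) : LinearMap.range (e - f) ≤ J • ⊤ := by
    have hmod : (J • ⊤ : Submodule S (S ⊗[R] M)).mkQ ∘ₗ e =
        (J • ⊤ : Submodule S (S ⊗[R] M)).mkQ ∘ₗ f :=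
      AlgebraTensorModule.ext_of_span_eq_top hg (congrFun h)
    rintro _ ⟨x, rfl⟩
    rw [LinearMap.sub_apply, ← Submodule.Quotient.eq]
    exact LinearMap.congr_fun hmod x
  let summandsWithRecord (r : Fin n → Q) : Set (Ideal S) :=
    {P | ∃ e, record e = r ∧ IsIdempotentElem e ∧ Nonempty ((S ⧸ P) ≃ₗ[S] LinearMap.range e)}
  refine Set.Countable.mono (s₂ := ⋃ r, summandsWithRecord r) ?_
    (Set.countable_iUnion fun r => Set.Subsingleton.countable ?_)
  · rintro P ⟨e, he, hP⟩
    exact Set.mem_iUnion.mpr ⟨record e, e, rfl, he, hP⟩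
  · rintro P ⟨e, rfl, he, ⟨φ⟩⟩ Q ⟨f, hef, hf, ⟨ψ⟩⟩
    obtain ⟨θ⟩ := he.nonempty_range_linearEquiv hJ hf (hrecord hef.symm)
    exact Ideal.eq_of_quotient_linearEquiv (φ.trans (θ.trans ψ.symm))

end BaseChange

theorem Submodule.countable_of_isNoetherian {R M : Type*} [Semiring R] [AddCommMonoid M]
    [Module R M] [Countable M] [IsNoetherian R M] : Countable (Submodule R M) := by
  refine Function.Surjective.countable
    (f := fun v : Σ n, Fin n → M => Submodule.span R (Set.range v.2)) fun N => ?_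
  obtain ⟨n, v, hv⟩ :=
    Submodule.fg_iff_exists_fin_generating_family.mp (IsNoetherian.noetherian N)
  exact ⟨⟨n, v⟩, hv⟩

theorem Module.Finite.exists_linearEquiv_quotient_fin (R M : Type*) [Ring R] [AddCommGroup M]
    [Module R M] [Module.Finite R M] :
    ∃ (n : ℕ) (N : Submodule R (Fin n → R)), Nonempty (((Fin n → R) ⧸ N) ≃ₗ[R] M) := by
  obtain ⟨n, f, hf⟩ := Module.Finite.exists_fin' R M
  exact ⟨n, LinearMap.ker f, ⟨f.quotKerEquivOfSurjective hf⟩⟩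

theorem AdicCompletion.surjective_mk_maximalIdeal_comp_algebraMap (R : Type*) [CommRing R]
    [IsLocalRing R] [IsNoetherianRing R] :
    Function.Surjective ((Ideal.Quotient.mk (maximalIdeal (AdicCompletion (maximalIdeal R) R))).comp
      (algebraMap R (AdicCompletion (maximalIdeal R) R))) := by
  intro x
  obtain ⟨y, hy⟩ := (AdicCompletion.residueField_map_bijective R).2 x
  obtain ⟨r, rfl⟩ := IsLocalRing.residue_surjective y
  exact ⟨r, by rw [← hy, IsLocalRing.ResidueField.map_residue]; rfl⟩

theorem stmt_10_general (R : Type) [CommRing R] [IsLocalRing R] [IsNoetherianRing R]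
    [Countable R]
    (hunc : ¬ Countable
      {P : PrimeSpectrum (AdicCompletion (maximalIdeal R) R) // Order.height P = 1}) :
    ∃ (𝓜 : Type) (_ : AddCommGroup 𝓜)
      (_ : Module (AdicCompletion (maximalIdeal R) R) 𝓜),
      Module.Finite (AdicCompletion (maximalIdeal R) R) 𝓜 ∧
      ¬ ∃ (M : Type) (_ : AddCommGroup M) (_ : Module R M)
        (𝓒 : Type) (_ : AddCommGroup 𝓒)
        (_ : Module (AdicCompletion (maximalIdeal R) R) 𝓒),
        Module.Finite R M ∧
        Nonempty ((𝓜 × 𝓒) ≃ₗ[AdicCompletion (maximalIdeal R) R]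
          (AdicCompletion (maximalIdeal R) R ⊗[R] M)) := by
  set S := AdicCompletion (maximalIdeal R) R
  have : ∀ n, Countable (Submodule R (Fin n → R)) := fun _ => Submodule.countable_of_isNoetherian
  let bad : Set (Ideal S) := ⋃ i : Σ n, Submodule R (Fin n → R),
    quotientSummandIdeals S (S ⊗[R] ((Fin i.1 → R) ⧸ i.2))
  have hbad : bad.Countable := Set.countable_iUnion fun i =>
    have : Countable ((Fin i.1 → R) ⧸ i.2) := Finsupp.Countable.of_moduleFinite (R := R)
    countable_quotientSummandIdeals (maximalIdeal_le_jacobson ⊥)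
      (AdicCompletion.surjective_mk_maximalIdeal_comp_algebraMap R)
  obtain ⟨P, hP⟩ : ∃ P : PrimeSpectrum S, P.asIdeal ∉ bad := by
    by_contra! h
    have : Countable (PrimeSpectrum S) := Set.countable_univ_iff.mp <|
      (hbad.preimage fun _ _ => PrimeSpectrum.ext).mono fun P _ => h P
    exact hunc inferInstance
  refine ⟨S ⧸ P.asIdeal, inferInstance, inferInstance, inferInstance, ?_⟩
  rintro ⟨M, _, _, C, _, _, _, ⟨g⟩⟩
  obtain ⟨n, N, ⟨eM⟩⟩ := Module.Finite.exists_linearEquiv_quotient_fin R M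
  exact hP (Set.mem_iUnion.mpr
    ⟨⟨n, N⟩, mem_quotientSummandIdeals (g.trans (eM.symm.baseChange R S M _))⟩)

/-- Over a countable Noetherian local ring of dimension `> 1` whose completion has
uncountably many height-one primes, some finitely generated `R̂`-module is not a direct
summand of any extended module. -/
theorem stmt_10 (R : Type) [CommRing R] [IsLocalRing R] [IsNoetherianRing R]
    [Countable R] (hdim : 1 < ringKrullDim R)
    (hunc : ¬ Countable
      {P : PrimeSpectrum (AdicCompletion (maximalIdeal R) R) // Order.height P = 1}) :
    ∃ (𝓜 : Type) (_ : AddCommGroup 𝓜)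
      (_ : Module (AdicCompletion (maximalIdeal R) R) 𝓜),
      Module.Finite (AdicCompletion (maximalIdeal R) R) 𝓜 ∧
      ¬ ∃ (M : Type) (_ : AddCommGroup M) (_ : Module R M)
        (𝓒 : Type) (_ : AddCommGroup 𝓒)
        (_ : Module (AdicCompletion (maximalIdeal R) R) 𝓒),
        Module.Finite R M ∧
        Nonempty ((𝓜 × 𝓒) ≃ₗ[AdicCompletion (maximalIdeal R) R]
          (AdicCompletion (maximalIdeal R) R ⊗[R] M)) :=
  stmt_10_general R hunc
end

section
/- Let $(\mathcal{R},\mathfrak{m})$ be a Noetherian local domain of dimension $d \geq 2$ with $\mathcal{R}$ normal, let $\mathfrak{a}$ be an ideal of height $d-1$, and let $x \in \mathfrak{m}$ be such that $\sqrt{\mathfrak{a} + x\mathcal{R}} = \mathfrak{m}$. Then the $\mathfrak{a}$-adic completion $(\mathcal{R}_x)^{\wedge_{\mathfrak{a}}}$ of the localization $\mathcal{R}_x$ is not finitely generated as an $\mathcal{R}$-module. -/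
/-!
If `x ∈ √𝔞` then `𝔞` would be `𝔪`-primary, so its only prime would be `𝔪`, of height `d ≠ d - 1`.
Hence `x ∉ √𝔞`, the extension of `𝔞` to `𝓡ₓ` is proper, and the completion is a nonzero ring in
which `x ∈ 𝔪` is invertible. By Nakayama's lemma no such ring is finitely generated over `𝓡`.
-/

open IsLocalRing

theorem Module.Finite.subsingleton_of_isUnit_algebraMap {R A : Type*} [CommRing R] [Ring A]
    [Algebra R A] [hA : Module.Finite R A] {x : R} (hx : x ∈ (⊥ : Ideal R).jacobson)
    (hu : IsUnit (algebraMap R A x)) : Subsingleton A := by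
  rw [← not_nontrivial_iff_subsingleton]
  intro _
  refine Submodule.top_ne_pointwise_smul_of_mem_jacobson_annihilator (M := A)
    (Ideal.jacobson_mono bot_le hx) (eq_top_iff.mpr fun a _ => ?_).symm
  obtain ⟨u, hu⟩ := hu
  refine (Submodule.mem_smul_pointwise_iff_exists _ _ _).mpr ⟨↑u⁻¹ * a, trivial, ?_⟩
  rw [Algebra.smul_def, ← hu, ← mul_assoc, Units.mul_inv, one_mul]

theorem AdicCompletion.nontrivial {R : Type*} [CommRing R] {I : Ideal R} (hI : I ≠ ⊤) :
    Nontrivial (AdicCompletion I R) :=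
  have : Nontrivial (R ⧸ I ^ 1) := Ideal.Quotient.nontrivial_iff.mpr (by simpa using hI)
  (AdicCompletion.surjective_evalₐ I 1).nontrivial

theorem IsLocalization.Away.map_ne_top_of_notMem_radical {R S : Type*} [CommRing R]
    [CommRing S] [Algebra R S] {x : R} [IsLocalization.Away x S] {I : Ideal R}
    (hx : x ∉ I.radical) : I.map (algebraMap R S) ≠ ⊤ := by
  rw [IsLocalization.map_algebraMap_ne_top_iff_disjoint (Submonoid.powers x), Set.disjoint_left]
  rintro _ ⟨n, rfl⟩ hn
  exact hx ⟨n, hn⟩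

theorem IsLocalization.Away.isUnit_algebraMap_restrictScalars {R S : Type*} [CommRing R]
    [CommRing S] [Algebra R S] (x : R) [IsLocalization.Away x S] (B : Type*) [Semiring B]
    [Algebra S B] : IsUnit (algebraMap R (RestrictScalars R S B) x) := by
  rw [← isUnit_map_iff (RestrictScalars.ringEquiv R S B), RestrictScalars.ringEquiv_algebraMap]
  exact (IsLocalization.Away.algebraMap_isUnit x).map _

theorem Ideal.radical_sup_span_singleton_of_mem_radical {R : Type*} [CommRing R] {I : Ideal R}
    {x : R} (hx : x ∈ I.radical) : (I + Ideal.span {x}).radical = I.radical := by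
  refine le_antisymm ?_ (Ideal.radical_mono le_sup_left)
  rw [Ideal.radical_le_radical_iff]
  exact sup_le Ideal.le_radical (Ideal.span_le.mpr (Set.singleton_subset_iff.mpr hx))

theorem PrimeSpectrum.setOf_le_asIdeal_eq_singleton_top {R : Type*} [CommRing R]
    [IsLocalRing R] {I : Ideal R} (hI : I.radical = maximalIdeal R) :
    {p : PrimeSpectrum R | I ≤ p.asIdeal} = {⊤} := by
  ext p
  rw [Set.mem_singleton_iff, ← top_le_iff]
  exact p.isPrime.radical_le_iff.symm.trans (hI ▸ Iff.rfl)

theorem sInf_height_setOf_le_asIdeal_eq_ringKrullDim {R : Type*} [CommRing R] [IsLocalRing R]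
    {I : Ideal R} (hI : I.radical = maximalIdeal R) :
    ((sInf (Order.height '' {p : PrimeSpectrum R | I ≤ p.asIdeal}) : ℕ∞) : WithBot ℕ∞) =
      ringKrullDim R := by
  rw [PrimeSpectrum.setOf_le_asIdeal_eq_singleton_top hI, Set.image_singleton, csInf_singleton]
  exact Order.height_top_eq_krullDim

theorem stmt_15_general (𝓡 : Type) [CommRing 𝓡] [IsLocalRing 𝓡]
    (d : ℕ) (hd : 2 ≤ d) (hdim : ringKrullDim 𝓡 = d)
    (𝔞 : Ideal 𝓡)
    (hht : sInf (Order.height '' {p : PrimeSpectrum 𝓡 | 𝔞 ≤ p.asIdeal})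
      = (d - 1 : ℕ))
    (x : 𝓡) (hx : x ∈ maximalIdeal 𝓡)
    (hrad : (𝔞 + Ideal.span {x}).radical = maximalIdeal 𝓡) :
    ¬ Module.Finite 𝓡 (RestrictScalars 𝓡 (Localization.Away x)
      (AdicCompletion (𝔞.map (algebraMap 𝓡 (Localization.Away x)))
        (Localization.Away x))) := by
  intro hfin
  have hx𝔞 : x ∉ 𝔞.radical := by
    intro hx𝔞
    have h := sInf_height_setOf_le_asIdeal_eq_ringKrullDim
      (Ideal.radical_sup_span_singleton_of_mem_radical hx𝔞 ▸ hrad)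
    rw [hht, hdim] at h
    norm_cast at h
    omega
  have := AdicCompletion.nontrivial
    (IsLocalization.Away.map_ne_top_of_notMem_radical (S := Localization.Away x) hx𝔞)
  -- `hfin` is stated for `RestrictScalars.module`, which is `Algebra.toModule` only after unfolding.
  have hsub := Module.Finite.subsingleton_of_isUnit_algebraMap (hA := hfin)
    (maximalIdeal_le_jacobson ⊥ hx)
    (IsLocalization.Away.isUnit_algebraMap_restrictScalars x (AdicCompletion _ _))
  exact not_subsingleton (AdicCompletion _ _) hsub

/-- Let `(𝓡, 𝔪)` be a Noetherian normal local domain of dimension `d ≥ 2`, `𝔞` an ideal of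
height `d - 1`, and `x ∈ 𝔪` with `√(𝔞 + (x)) = 𝔪`.  Then the `𝔞`-adic completion of the
localization `𝓡ₓ` is not a finitely generated `𝓡`-module. -/
theorem stmt_15 (𝓡 : Type) [CommRing 𝓡] [IsDomain 𝓡] [IsLocalRing 𝓡]
    [IsNoetherianRing 𝓡] [IsIntegrallyClosed 𝓡]
    (d : ℕ) (hd : 2 ≤ d) (hdim : ringKrullDim 𝓡 = d)
    (𝔞 : Ideal 𝓡)
    (hht : sInf (Order.height '' {p : PrimeSpectrum 𝓡 | 𝔞 ≤ p.asIdeal})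
      = (d - 1 : ℕ))
    (x : 𝓡) (hx : x ∈ maximalIdeal 𝓡)
    (hrad : (𝔞 + Ideal.span {x}).radical = maximalIdeal 𝓡) :
    ¬ Module.Finite 𝓡 (RestrictScalars 𝓡 (Localization.Away x)
      (AdicCompletion (𝔞.map (algebraMap 𝓡 (Localization.Away x)))
        (Localization.Away x))) :=
  stmt_15_general 𝓡 d hd hdim 𝔞 hht x hx hrad
end
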